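/- arXiv:2011.05575 — 4 statements merged into one kernel-verified Lean document; each statement's English description precedes it below -/
import Mathlib

section
/- The Černý automaton C_n with n states 0, ..., n-1 and two letters a, b, where a maps state 0 to 1 and fixes all other states, and b maps each state i to i+1 mod n, has a synchronizing word of length (n-1)². -/
/-- Run a word through a DFA with transition function `δ`. -/
def runWord {Q A : Type*} (δ : Q → A → Q) (q : Q) (w : List A) : Q := w.foldl δ q

namespace CernyAux

/-- The Černý transition function. -/
def cd (n : ℕ) : ZMod n → Bool → ZMod n :=
  fun i c => if c then (if i = 0 then 1 else i) else i + 1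

/-- One block: the letter `a` followed by `n-1` copies of `b`. -/
def block (n : ℕ) : List Bool := true :: List.replicate (n - 1) false

lemma run_replicate {n : ℕ} (q : ZMod n) (m : ℕ) :
    runWord (cd n) q (List.replicate m false) = q + m := by
  induction m generalizing q with
  | zero => simp [runWord]
  | succ m ih =>
      rw [List.replicate_succ]
      show runWord (cd n) (cd n q false) (List.replicate m false) = _
      rw [ih]
      simp only [cd, if_neg (by simp : ¬ (false : Bool) = true)]
      push_cast
      ring

lemma val_run_block {n : ℕ} (hn : 2 ≤ n) (q : ZMod n) :
    (runWord (cd n) q (block n)).val = q.val - 1 := by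
  haveI : NeZero n := ⟨by omega⟩
  have hrun : runWord (cd n) q (block n) = (if q = 0 then 1 else q) - 1 := by
    show runWord (cd n) (cd n q true) (List.replicate (n - 1) false) = _
    rw [run_replicate]
    have hc : ((n - 1 : ℕ) : ZMod n) = -1 := by
      have : ((n - 1 : ℕ) : ZMod n) = (n : ZMod n) - 1 := by
        push_cast [Nat.cast_sub (by omega : 1 ≤ n)]; ring
      rw [this, ZMod.natCast_self, zero_sub]
    rw [hc]
    simp [cd, sub_eq_add_neg]
  by_cases hq : q = 0
  · subst hq
    rw [hrun, if_pos rfl, sub_self]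
    simp
  · rw [hrun, if_neg hq]
    have hv0 : q.val ≠ 0 := by
      simpa [ZMod.val_eq_zero] using hq
    have hqc : ((q.val : ℕ) : ZMod n) = q := ZMod.natCast_rightInverse q
    have hsub : q - 1 = ((q.val - 1 : ℕ) : ZMod n) := by
      have key : ((q.val - 1 : ℕ) : ZMod n) + 1 = q := by
        calc ((q.val - 1 : ℕ) : ZMod n) + 1
            = ((q.val - 1 + 1 : ℕ) : ZMod n) := by push_cast; ring
          _ = ((q.val : ℕ) : ZMod n) := by rw [show q.val - 1 + 1 = q.val from by omega]
          _ = q := hqc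
      rw [sub_eq_iff_eq_add]
      exact key.symm
    rw [hsub, ZMod.val_cast_of_lt (by have := ZMod.val_lt q; omega)]

lemma val_run_words {n : ℕ} (hn : 2 ≤ n) (q : ZMod n) (k : ℕ) :
    (runWord (cd n) q ((List.replicate k (block n)).flatten)).val = q.val - k := by
  induction k generalizing q with
  | zero => simp [runWord]
  | succ k ih =>
      rw [List.replicate_succ, List.flatten_cons]
      have happ : runWord (cd n) q (block n ++ (List.replicate k (block n)).flatten)
          = runWord (cd n) (runWord (cd n) q (block n)) ((List.replicate k (block n)).flatten) := by
        simp [runWord, List.foldl_append]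
      rw [happ, ih, val_run_block hn]
      omega

end CernyAux

/-- The Černý automaton `C_n` on `ZMod n` (letter `true` = a sends 0 to 1 and fixes
other states; letter `false` = b adds one) has a synchronizing word of length `(n-1)²`. -/
theorem cerny_upper {n : ℕ} (hn : 2 ≤ n) :
    ∃ w : List Bool, w.length = (n - 1) ^ 2 ∧
      ∃ q0 : ZMod n, ∀ q : ZMod n,
        runWord (fun (i : ZMod n) (c : Bool) => if c then (if i = 0 then 1 else i) else i + 1)
          q w = q0 := by
  haveI : NeZero n := ⟨by omega⟩
  refine ⟨(List.replicate (n - 2) (CernyAux.block n)).flatten ++ [true], ?_, 1, ?_⟩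
  · obtain ⟨m, rfl⟩ : ∃ m, n = m + 2 := ⟨n - 2, by omega⟩
    simp [CernyAux.block, List.length_flatten, List.map_replicate, List.sum_replicate, smul_eq_mul]
    ring
  · intro q
    show runWord (CernyAux.cd n) q _ = 1
    have happ : runWord (CernyAux.cd n) q
        ((List.replicate (n - 2) (CernyAux.block n)).flatten ++ [true])
        = runWord (CernyAux.cd n)
            (runWord (CernyAux.cd n) q ((List.replicate (n - 2) (CernyAux.block n)).flatten))
            [true] := by
      simp [runWord, List.foldl_append]
    set r := runWord (CernyAux.cd n) q ((List.replicate (n - 2) (CernyAux.block n)).flatten) with hr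
    have hval : r.val = q.val - (n - 2) := CernyAux.val_run_words hn q (n - 2)
    have hq : q.val < n := ZMod.val_lt q
    have hle : r.val ≤ 1 := by omega
    rw [happ]
    show CernyAux.cd n r true = 1
    by_cases h0 : r = 0
    · simp [CernyAux.cd, h0]
    · have hv0 : r.val ≠ 0 := by simpa [ZMod.val_eq_zero] using h0
      have hv1 : r.val = 1 := by omega
      have : r = 1 := by
        have hrc : ((r.val : ℕ) : ZMod n) = r := ZMod.natCast_rightInverse r
        rw [← hrc, hv1, Nat.cast_one]
      simp [CernyAux.cd, h0, this]
end

section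
/- The Černý automaton C_n has no synchronizing word of length less than (n-1)². -/
def cdelta (n : ℕ) : ZMod n → Bool → ZMod n :=
  fun i c => if c then (if i = 0 then 1 else i) else i + 1

def bumps (n : ℕ) : ZMod n → List Bool → ℕ
  | _, [] => 0
  | q, c :: w => (if c = true ∧ q = 0 then 1 else 0) + bumps n (cdelta n q c) w

lemma pos_formula (n : ℕ) : ∀ (w : List Bool) (q : ZMod n),
    runWord (cdelta n) q w = q + ((w.count false : ℕ) : ZMod n) + (bumps n q w : ZMod n)
  | [], q => by simp [runWord, bumps]
  | c :: w, q => by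
    have h := pos_formula n w (cdelta n q c)
    simp only [runWord, List.foldl] at h ⊢
    rw [h, bumps]
    rcases c with _ | _
    · simp [cdelta, List.count_cons]
      push_cast
      ring
    · by_cases hq : q = 0 <;> simp [cdelta, hq, List.count_cons] <;> push_cast <;> ring

lemma bumps_le_count (n : ℕ) : ∀ (w : List Bool) (q : ZMod n),
    bumps n q w ≤ w.count true
  | [], q => by simp [bumps]
  | c :: w, q => by
    rw [bumps]
    have h := bumps_le_count n w (cdelta n q c)
    rcases c with _ | _
    · simpa [List.count_cons] using h
    · simp only [List.count_cons]
      by_cases hq : q = 0 <;> simp [hq] at h ⊢ <;> omega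

lemma val_one_le (n : ℕ) [NeZero n] : (1 : ZMod n).val ≤ 1 := by
  have : (1 : ZMod n) = ((1 : ℕ) : ZMod n) := by push_cast; rfl
  rw [this, ZMod.val_natCast]
  exact Nat.mod_le _ _

lemma travel (n : ℕ) [NeZero n] : ∀ (w : List Bool) (q : ZMod n),
    1 ≤ bumps n q w →
    (-q : ZMod n).val + (bumps n q w - 1) * (n - 1) ≤ w.count false
  | [], q => by simp [bumps]
  | c :: w, q => by
    intro hk
    rw [bumps] at hk ⊢
    rcases c with _ | _
    · -- c = false : step b
      have hcd : cdelta n q false = q + 1 := rfl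
      rw [hcd] at hk ⊢
      simp only [show ((false = true ∧ q = 0)) = False by simp, if_false, Nat.zero_add] at hk ⊢
      have hih := travel n w (q + 1) hk
      have hval : (-q : ZMod n).val ≤ (-(q + 1) : ZMod n).val + 1 := by
        have he : (-q : ZMod n) = -(q+1) + 1 := by ring
        rw [he]
        calc (-(q+1) + 1 : ZMod n).val ≤ (-(q+1) : ZMod n).val + (1 : ZMod n).val :=
              ZMod.val_add_le _ _
          _ ≤ (-(q+1) : ZMod n).val + 1 := by have := val_one_le n; omega
      have hc : (List.count false (false :: w)) = List.count false w + 1 := by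
        simp [List.count_cons]
      rw [hc]
      omega
    · have hc : (List.count false (true :: w)) = List.count false w := by
        simp [List.count_cons]
      rw [hc]
      by_cases hq : q = 0
      · -- bump
        have hcd : cdelta n q true = 1 := by simp [cdelta, hq]
        rw [hcd] at hk ⊢
        have hcond : (true = true ∧ q = 0) := ⟨rfl, hq⟩
        rw [if_pos hcond] at hk ⊢
        rw [hq]
        simp only [neg_zero, ZMod.val_zero, Nat.zero_add]
        by_cases hk' : 1 ≤ bumps n 1 w
        · have hih := travel n w 1 hk'
          have hneg : ((-1 : ZMod n)).val = n - 1 := by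
            obtain ⟨m, hm⟩ := Nat.exists_eq_succ_of_ne_zero (NeZero.ne n)
            subst hm
            simpa using ZMod.val_neg_one m
          rw [hneg] at hih
          have h1 : (1 + bumps n 1 w - 1) * (n-1) = (bumps n 1 w) * (n-1) := by
            congr 1; omega
          rw [h1]
          obtain ⟨m, hm⟩ := Nat.exists_eq_add_of_le hk'
          have h2 : bumps n 1 w * (n-1) = (n-1) + (bumps n 1 w - 1) * (n-1) := by
            rw [hm, show 1 + m - 1 = m from by omega]; ring
          omega
        · have h0 : bumps n 1 w = 0 := by omega
          simp [h0]
      · have hcd : cdelta n q true = q := by simp [cdelta, hq]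
        rw [hcd] at hk ⊢
        have hcond : ¬(true = true ∧ q = 0) := by simp [hq]
        rw [if_neg hcond] at hk ⊢
        simp only [Nat.zero_add] at hk ⊢
        exact travel n w q hk

lemma count_tf : ∀ w : List Bool, w.count true + w.count false = w.length
  | [] => by simp
  | c :: w => by
    have := count_tf w
    cases c <;> simp [List.count_cons] <;> omega

/-- The Černý automaton `C_n` has no synchronizing word of length less than `(n-1)²`. -/
theorem cerny_lower {n : ℕ} (hn : 2 ≤ n) :
    ∀ w : List Bool,
      (∃ q0 : ZMod n, ∀ q : ZMod n,
          runWord (fun (i : ZMod n) (c : Bool) => if c then (if i = 0 then 1 else i) else i + 1)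
            q w = q0) →
      (n - 1) ^ 2 ≤ w.length := by
  haveI : NeZero n := ⟨by omega⟩
  rintro w ⟨q0, hq0⟩
  set q1 : ZMod n := q0 - ((w.count false : ℕ) : ZMod n) - ((n - 1 : ℕ) : ZMod n) with hq1
  have hrun : runWord (cdelta n) q1 w = q0 := hq0 q1
  rw [pos_formula n w q1] at hrun
  set K := bumps n q1 w with hK
  have hcast : (K : ZMod n) = ((n - 1 : ℕ) : ZMod n) := by
    rw [hq1] at hrun
    linear_combination hrun
  have hmod : K % n = (n - 1) % n := (ZMod.natCast_eq_natCast_iff _ _ _).mp hcast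
  have hKge : n - 1 ≤ K := by
    have h1 : (n - 1) % n = n - 1 := Nat.mod_eq_of_lt (by omega)
    have h2 := Nat.mod_le K n
    omega
  have hK1 : 1 ≤ K := by omega
  have htrav := travel n w q1 hK1
  have hct := bumps_le_count n w q1
  have hlen := count_tf w
  obtain ⟨m, rfl⟩ : ∃ m, n = m + 2 := ⟨n - 2, by omega⟩
  have hs : m + 2 - 1 = m + 1 := rfl
  rw [hs] at hKge htrav ⊢
  have h2 : m * (m + 1) ≤ w.count false := by
    have hmul : m * (m + 1) ≤ (K - 1) * (m + 1) :=
      Nat.mul_le_mul_right _ (by omega)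
    exact le_trans hmul (le_trans (Nat.le_add_left _ _) htrav)
  calc (m + 1) ^ 2 = (m + 1) + m * (m + 1) := by ring
    _ ≤ w.count true + w.count false := Nat.add_le_add (le_trans hKge hct) h2
    _ = w.length := hlen
end

section
/- For any coloring of a strongly connected digraph of uniform outdegree, the transitive-reflexive closure of the stability relation on the resulting DFA is a congruence: if p ρ q then δ(p, σ) ρ δ(q, σ) for every letter σ. -/
/-- States `p, q` are stable if every common extension can be completed to a merging word. -/
def Stable {Q A : Type*} (δ : Q → A → Q) (p q : Q) : Prop :=
  ∀ u : List A, ∃ w : List A, runWord δ p (u ++ w) = runWord δ q (u ++ w)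

/-- Stability is compatible with the action of each letter. -/
lemma stable_step {Q A : Type*} (δ : Q → A → Q) {p q : Q} (h : Stable δ p q) (a : A) :
    Stable δ (δ p a) (δ q a) := by
  intro u
  obtain ⟨w, hw⟩ := h (a :: u)
  exact ⟨w, hw⟩

/-- For any coloring (DFA) on a strongly connected digraph of uniform outdegree,
the reflexive-transitive(-symmetric) closure of the stability relation is a
congruence: it is compatible with the action of every letter. -/
theorem stability_closure_congruence {Q A : Type*} [Fintype Q] (δ : Q → A → Q)
    (hsc : ∀ p q : Q, Relation.ReflTransGen (fun x y => ∃ a, δ x a = y) p q) :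
    ∀ p q : Q, Relation.EqvGen (Stable δ) p q →
      ∀ a : A, Relation.EqvGen (Stable δ) (δ p a) (δ q a) := by
  intro p q h a
  induction h with
  | rel x y hxy => exact Relation.EqvGen.rel _ _ (stable_step δ hxy a)
  | refl x => exact Relation.EqvGen.refl _
  | symm x y _ ih => exact Relation.EqvGen.symm _ _ ih
  | trans x y z _ _ ih1 ih2 => exact Relation.EqvGen.trans _ _ _ ih1 ih2
end

section
/- An n-state DFA is synchronizing if and only if it has a synchronizing word of length at most n³ (indeed at most (n³ - n)/6, but n³ suffices): whenever some synchronizing word exists, a synchronizing word of length ≤ n³ exists. -/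
section

variable {Q A : Type*} (δ : Q → A → Q)

theorem runWord_append (q : Q) (u v : List A) :
    runWord δ q (u ++ v) = runWord δ (runWord δ q u) v :=
  List.foldl_append

theorem runWord_eq_evalFrom (s q : Q) (w : List A) :
    runWord δ q w = (DFA.mk δ s ∅).evalFrom q w := rfl

theorem runWord_prodMap (p q : Q) (w : List A) :
    runWord (fun s a => (δ s.1 a, δ s.2 a)) (p, q) w = (runWord δ p w, runWord δ q w) := by
  induction w generalizing p q with
  | nil => rfl
  | cons a w ih => exact ih (δ p a) (δ q a)

theorem exists_length_lt_card_of_runWord_eq [Fintype Q] {s t : Q} {w : List A}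
    (hw : runWord δ s w = t) :
    ∃ v : List A, v.length < Fintype.card Q ∧ runWord δ s v = t := by
  induction hn : w.length using Nat.strong_induction_on generalizing w with
  | _ n ih =>
    by_cases hshort : w.length < Fintype.card Q
    · exact ⟨w, hshort, hw⟩
    obtain ⟨r, a, b, c, rfl, -, hb, ha, -, hc⟩ :=
      (DFA.mk δ s ∅).evalFrom_split (not_lt.mp hshort) hw
    refine ih (a ++ c).length ?_ (w := a ++ c) ?_ rfl
    · have : b.length ≠ 0 := by simpa using hb
      simp only [List.length_append] at hn ⊢
      omega
    · rw [runWord_eq_evalFrom δ s, DFA.evalFrom_of_append, ha, hc]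

theorem exists_merging_word_length_lt_card_sq [Fintype Q] {p q : Q} {w : List A}
    (hw : runWord δ p w = runWord δ q w) :
    ∃ v : List A, v.length < Fintype.card Q ^ 2 ∧ runWord δ p v = runWord δ q v := by
  have hdiag : runWord (fun s a => (δ s.1 a, δ s.2 a)) (p, q) w =
      (runWord δ q w, runWord δ q w) := by
    rw [runWord_prodMap, hw]
  obtain ⟨v, hlen, hv⟩ := exists_length_lt_card_of_runWord_eq _ hdiag
  rw [runWord_prodMap, Prod.mk.injEq] at hv
  refine ⟨v, ?_, hv.1.trans hv.2.symm⟩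
  simpa [Fintype.card_prod, sq] using hlen

theorem card_image_runWord_lt [DecidableEq Q] {S : Finset Q} {p q : Q} (hp : p ∈ S)
    (hq : q ∈ S) (hpq : p ≠ q) {u : List A} (hu : runWord δ p u = runWord δ q u) :
    (S.image (runWord δ · u)).card < S.card :=
  lt_of_le_of_ne Finset.card_image_le fun h => hpq (Finset.card_image_iff.mp h hp hq hu)

theorem exists_collapsing_word_of_forall_mergeable [Fintype Q]
    (hmerge : ∀ p q : Q, ∃ w : List A, runWord δ p w = runWord δ q w) (k : ℕ) (S : Finset Q)
    (hS : S.card ≤ k + 1) :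
    ∃ w : List A, w.length ≤ k * Fintype.card Q ^ 2 ∧
      ∀ p ∈ S, ∀ q ∈ S, runWord δ p w = runWord δ q w := by
  classical
  induction k generalizing S with
  | zero => exact ⟨[], Nat.zero_le _, fun p hp q hq => by rw [Finset.card_le_one.mp hS p hp q hq]⟩
  | succ k ih =>
    rcases le_or_gt S.card (k + 1) with hsmall | hlarge
    · obtain ⟨w, hlen, hw⟩ := ih S hsmall
      exact ⟨w, hlen.trans (Nat.mul_le_mul_right _ k.le_succ), hw⟩
    obtain ⟨p, hp, q, hq, hpq⟩ := Finset.one_lt_card.mp (by omega : 1 < S.card)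
    obtain ⟨w, hw⟩ := hmerge p q
    obtain ⟨u, hulen, hu⟩ := exists_merging_word_length_lt_card_sq δ hw
    set T := S.image (runWord δ · u)
    have hT : T.card < S.card := card_image_runWord_lt δ hp hq hpq hu
    obtain ⟨v, hvlen, hv⟩ := ih T (by omega)
    refine ⟨u ++ v, ?_, fun p hp q hq => ?_⟩
    · rw [List.length_append, Nat.succ_mul]
      omega
    · rw [runWord_append, runWord_append]
      exact hv _ (Finset.mem_image_of_mem _ hp) _ (Finset.mem_image_of_mem _ hq)

end

theorem sync_iff_short_sync_general {Q A : Type*} [Fintype Q] (δ : Q → A → Q) :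
    (∃ w : List A, ∃ q0 : Q, ∀ q : Q, runWord δ q w = q0) ↔
      (∃ w : List A, w.length ≤ (Fintype.card Q) ^ 3 ∧
        ∃ q0 : Q, ∀ q : Q, runWord δ q w = q0) := by
  refine ⟨fun ⟨w, q0, hw⟩ => ?_, fun ⟨w, _, hw⟩ => ⟨w, hw⟩⟩
  obtain ⟨v, hvlen, hv⟩ := exists_collapsing_word_of_forall_mergeable δ
    (fun p q => ⟨w, (hw p).trans (hw q).symm⟩) (Fintype.card Q - 1) Finset.univ
    (by rw [Finset.card_univ]; omega)
  refine ⟨v, ?_, runWord δ q0 v, fun q => hv q (Finset.mem_univ q) q0 (Finset.mem_univ q0)⟩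
  calc v.length ≤ (Fintype.card Q - 1) * Fintype.card Q ^ 2 := hvlen
    _ ≤ Fintype.card Q * Fintype.card Q ^ 2 := Nat.mul_le_mul_right _ (Nat.sub_le _ _)
    _ = Fintype.card Q ^ 3 := by ring

/-- An `n`-state DFA is synchronizing iff it has a synchronizing word of length at most `n³`. -/
theorem sync_iff_short_sync {Q A : Type*} [Fintype Q] [Nonempty Q] (δ : Q → A → Q) :
    (∃ w : List A, ∃ q0 : Q, ∀ q : Q, runWord δ q w = q0) ↔
      (∃ w : List A, w.length ≤ (Fintype.card Q) ^ 3 ∧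
        ∃ q0 : Q, ∀ q : Q, runWord δ q w = q0) :=
  sync_iff_short_sync_general δ
end
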